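/- Let D ∈ ℝ^{n×n} be diagonal with entries in [0, L], X ∈ ℝ^{n×p}, G ∈ ℝ^{p×p} symmetric with G ⪰ τ I_p for τ > 0, M = (Xᵀ D X + n G)^{-1}, and V = D - D X M Xᵀ D. Then (L τ^{-1} ‖X/√n‖_op² + 1)^{-1} D ⪯ V ⪯ D ⪯ L I_n. -/

import Mathlib

open Matrix

/-- Loewner order: `A ⪯ B` iff `B - A` is positive semidefinite. -/
def LoewnerLE {p : ℕ} (A B : Matrix (Fin p) (Fin p) ℝ) : Prop := (B - A).PosSemidef

/-- Operator norm (largest singular value) of a rectangular real matrix, viewed as a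
linear map between Euclidean spaces. -/
noncomputable def matOpNorm {n p : ℕ} (X : Matrix (Fin n) (Fin p) ℝ) : ℝ :=
  ‖LinearMap.toContinuousLinearMap (Matrix.toEuclideanLin X)‖

/-!
With `A = XᵀDX + nG`, `w = A⁻¹XᵀDx` and `y = Xw`, the quadratic form of the correction term
`DXA⁻¹XᵀD` at `x` is `t = xᵀDy = wᵀAw = yᵀDy + n wᵀGw`. Since
`yᵀDy ≤ L‖y‖² ≤ L‖X‖²‖w‖² ≤ K · n wᵀGw` with `K = Lτ⁻¹‖X/√n‖²`, we get `(K + 1) yᵀDy ≤ K t`.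
Together with the Cauchy–Schwarz inequality `t² ≤ (xᵀDx)(yᵀDy)` for the semi-inner product
given by `D`, this yields `(K + 1) t ≤ K xᵀDx`, i.e. `xᵀVx ≥ (K + 1)⁻¹ xᵀDx`.
-/

lemma add_one_mul_le_of_sq_le {K α β h : ℝ} (hK : 0 ≤ K) (hα : 0 ≤ α) (hβ : 0 ≤ β)
    (hh : 0 ≤ h) (hβh : β ≤ K * h) (hCS : (β + h) ^ 2 ≤ α * β) :
    (K + 1) * (β + h) ≤ K * α := by
  rcases (add_nonneg hβ hh).eq_or_lt with ht | ht
  · rw [← ht, mul_zero]; positivity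
  · refine le_of_mul_le_mul_right ?_ ht
    nlinarith [mul_le_mul_of_nonneg_left hβh hα]

namespace Matrix

variable {m k : Type*}

lemma posDef_of_posSemidef_sub_smul_one [DecidableEq k] {G : Matrix k k ℝ} {τ : ℝ} (hτ : 0 < τ)
    (h : (G - τ • 1).PosSemidef) : G.PosDef := by
  simpa using PosDef.posSemidef_add h (PosDef.one.smul hτ)

variable [Fintype m] [Fintype k]

lemma IsHermitian.dotProduct_mulVec_comm {D : Matrix m m ℝ} (hD : D.IsHermitian) (x y : m → ℝ) :
    x ⬝ᵥ (D *ᵥ y) = y ⬝ᵥ (D *ᵥ x) := by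
  rw [dotProduct_mulVec, ← mulVec_transpose, ← conjTranspose_eq_transpose_of_trivial, hD.eq,
    dotProduct_comm]

lemma PosSemidef.dotProduct_mulVec_self_nonneg {D : Matrix m m ℝ} (hD : D.PosSemidef)
    (x : m → ℝ) : 0 ≤ x ⬝ᵥ (D *ᵥ x) := by
  simpa using hD.dotProduct_mulVec_nonneg x

lemma dotProduct_mulVec_le_of_posSemidef_sub {A B : Matrix m m ℝ} (h : (B - A).PosSemidef)
    (x : m → ℝ) : x ⬝ᵥ (A *ᵥ x) ≤ x ⬝ᵥ (B *ᵥ x) := by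
  have := h.dotProduct_mulVec_self_nonneg x
  rwa [sub_mulVec, dotProduct_sub, sub_nonneg] at this

lemma PosSemidef.sq_dotProduct_mulVec_le {D : Matrix m m ℝ} (hD : D.PosSemidef) (x y : m → ℝ) :
    (x ⬝ᵥ (D *ᵥ y)) ^ 2 ≤ (x ⬝ᵥ (D *ᵥ x)) * (y ⬝ᵥ (D *ᵥ y)) := by
  have hquad : ∀ s : ℝ, 0 ≤ (y ⬝ᵥ (D *ᵥ y)) * (s * s) + 2 * (x ⬝ᵥ (D *ᵥ y)) * s
      + x ⬝ᵥ (D *ᵥ x) := by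
    intro s
    have h := hD.dotProduct_mulVec_self_nonneg (x + s • y)
    simp only [mulVec_add, mulVec_smul, dotProduct_add, add_dotProduct, dotProduct_smul,
      smul_dotProduct, smul_eq_mul, hD.isHermitian.dotProduct_mulVec_comm y x] at h
    linarith
  have := discrim_le_zero hquad
  rw [discrim] at this
  linarith

variable {D : Matrix m m ℝ} {H : Matrix k k ℝ}

lemma PosSemidef.transpose_mul_mul_add_posDef (hD : D.PosSemidef) (hH : H.PosDef)
    (X : Matrix m k ℝ) : (Xᵀ * D * X + H).PosDef := by
  simpa using PosDef.posSemidef_add (hD.conjTranspose_mul_mul_same X) hH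

variable [DecidableEq k]

lemma PosSemidef.mul_mul_inv_mul_transpose_mul (hD : D.IsHermitian) {A : Matrix k k ℝ}
    (hA : A.PosSemidef) (X : Matrix m k ℝ) : (D * X * A⁻¹ * Xᵀ * D).PosSemidef := by
  have h := hA.inv.mul_mul_conjTranspose_same (D * X)
  rwa [conjTranspose_mul, hD.eq, conjTranspose_eq_transpose_of_trivial, ← Matrix.mul_assoc] at h

theorem add_one_mul_dotProduct_mul_inv_mul_le (hD : D.PosSemidef) (hH : H.PosDef)
    (X : Matrix m k ℝ) {K : ℝ} (hK0 : 0 ≤ K)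
    (hK : ∀ w, (X *ᵥ w) ⬝ᵥ (D *ᵥ (X *ᵥ w)) ≤ K * (w ⬝ᵥ (H *ᵥ w))) (x : m → ℝ) :
    (K + 1) * (x ⬝ᵥ ((D * X * (Xᵀ * D * X + H)⁻¹ * Xᵀ * D) *ᵥ x)) ≤ K * (x ⬝ᵥ (D *ᵥ x)) := by
  set A := Xᵀ * D * X + H
  have hAdet : IsUnit A.det :=
    (isUnit_iff_isUnit_det A).mp (hD.transpose_mul_mul_add_posDef hH X).isUnit
  set w := A⁻¹ *ᵥ (Xᵀ *ᵥ (D *ᵥ x))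
  have hAw : A *ᵥ w = Xᵀ *ᵥ (D *ᵥ x) := by
    rw [mulVec_mulVec, mul_nonsing_inv A hAdet, one_mulVec]
  have hcorr : (D * X * A⁻¹ * Xᵀ * D) *ᵥ x = D *ᵥ (X *ᵥ w) := by
    simp only [w, mulVec_mulVec, Matrix.mul_assoc]
  have hsplit : x ⬝ᵥ (D *ᵥ (X *ᵥ w)) = (X *ᵥ w) ⬝ᵥ (D *ᵥ (X *ᵥ w)) + w ⬝ᵥ (H *ᵥ w) :=
    calc x ⬝ᵥ (D *ᵥ (X *ᵥ w)) = w ⬝ᵥ (A *ᵥ w) := by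
          rw [hAw, dotProduct_transpose_mulVec, hD.isHermitian.dotProduct_mulVec_comm,
            dotProduct_comm]
      _ = _ := by
          rw [add_mulVec, dotProduct_add, ← mulVec_mulVec, ← mulVec_mulVec,
            dotProduct_transpose_mulVec, dotProduct_comm (D *ᵥ _)]
  rw [hcorr, hsplit]
  refine add_one_mul_le_of_sq_le hK0 (hD.dotProduct_mulVec_self_nonneg x)
    (hD.dotProduct_mulVec_self_nonneg _) (hH.posSemidef.dotProduct_mulVec_self_nonneg w) (hK w) ?_
  rw [← hsplit]
  exact hD.sq_dotProduct_mulVec_le x (X *ᵥ w)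

theorem posSemidef_sub_mul_inv_mul_sub_smul (hD : D.PosSemidef) (hH : H.PosDef)
    (X : Matrix m k ℝ) {K : ℝ} (hK0 : 0 ≤ K)
    (hK : ∀ w, (X *ᵥ w) ⬝ᵥ (D *ᵥ (X *ᵥ w)) ≤ K * (w ⬝ᵥ (H *ᵥ w))) :
    (D - D * X * (Xᵀ * D * X + H)⁻¹ * Xᵀ * D - (K + 1)⁻¹ • D).PosSemidef := by
  have hP := PosSemidef.mul_mul_inv_mul_transpose_mul hD.isHermitian
    (hD.transpose_mul_mul_add_posDef hH X).posSemidef X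
  refine .of_dotProduct_mulVec_nonneg
    ((hD.isHermitian.sub hP.isHermitian).sub (hD.smul (by positivity)).isHermitian) fun x => ?_
  have h := add_one_mul_dotProduct_mul_inv_mul_le hD hH X hK0 hK x
  rw [star_trivial, sub_mulVec, sub_mulVec, smul_mulVec, dotProduct_sub, dotProduct_sub,
    dotProduct_smul, smul_eq_mul]
  have hK1 : 0 < K + 1 := by linarith
  rw [← mul_nonneg_iff_of_pos_left hK1]
  field_simp
  linarith

end Matrix

lemma matOpNorm_smul {n p : ℕ} (c : ℝ) (X : Matrix (Fin n) (Fin p) ℝ) :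
    matOpNorm (c • X) = |c| * matOpNorm X := by
  rw [matOpNorm, matOpNorm, map_smul, map_smul, norm_smul, Real.norm_eq_abs]

lemma dotProduct_mulVec_self_le_matOpNorm_sq {n p : ℕ} (Y : Matrix (Fin n) (Fin p) ℝ)
    (w : Fin p → ℝ) : (Y *ᵥ w) ⬝ᵥ (Y *ᵥ w) ≤ matOpNorm Y ^ 2 * (w ⬝ᵥ w) := by
  have hle : ‖WithLp.toLp 2 (Y *ᵥ w)‖ ≤ matOpNorm Y * ‖WithLp.toLp 2 w‖ :=
    (LinearMap.toContinuousLinearMap (Matrix.toEuclideanLin Y)).le_opNorm (WithLp.toLp 2 w)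
  have hsq := pow_le_pow_left₀ (norm_nonneg _) hle 2
  rw [mul_pow, EuclideanSpace.real_norm_sq_eq, EuclideanSpace.real_norm_sq_eq] at hsq
  simpa only [dotProduct, sq] using hsq

lemma dotProduct_mulVec_mulVec_le_of_loewnerLE {n p : ℕ} (hn : 0 < n) {L τ : ℝ} (hL : 0 ≤ L)
    (hτ : 0 < τ) {D : Matrix (Fin n) (Fin n) ℝ} (hDL : LoewnerLE D (L • 1))
    {G : Matrix (Fin p) (Fin p) ℝ} (hGτ : LoewnerLE (τ • 1) G) (X : Matrix (Fin n) (Fin p) ℝ)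
    (w : Fin p → ℝ) :
    (X *ᵥ w) ⬝ᵥ (D *ᵥ (X *ᵥ w)) ≤
      L * τ⁻¹ * matOpNorm ((Real.sqrt (n : ℝ))⁻¹ • X) ^ 2 * (w ⬝ᵥ (((n : ℝ) • G) *ᵥ w)) := by
  have hn' : (0 : ℝ) < n := by exact_mod_cast hn
  calc (X *ᵥ w) ⬝ᵥ (D *ᵥ (X *ᵥ w))
      ≤ (X *ᵥ w) ⬝ᵥ ((L • 1 : Matrix (Fin n) (Fin n) ℝ) *ᵥ (X *ᵥ w)) :=
        dotProduct_mulVec_le_of_posSemidef_sub hDL _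
    _ = L * ((X *ᵥ w) ⬝ᵥ (X *ᵥ w)) := by rw [smul_mulVec, one_mulVec, dotProduct_smul, smul_eq_mul]
    _ ≤ L * (matOpNorm X ^ 2 * (w ⬝ᵥ w)) := by
        gcongr; exact dotProduct_mulVec_self_le_matOpNorm_sq X w
    _ = L * τ⁻¹ * matOpNorm ((Real.sqrt (n : ℝ))⁻¹ • X) ^ 2 *
          (n * (w ⬝ᵥ ((τ • 1 : Matrix (Fin p) (Fin p) ℝ) *ᵥ w))) := by
        rw [matOpNorm_smul, smul_mulVec, one_mulVec, dotProduct_smul, smul_eq_mul, mul_pow, sq_abs,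
          inv_pow, Real.sq_sqrt hn'.le]
        field_simp
    _ ≤ L * τ⁻¹ * matOpNorm ((Real.sqrt (n : ℝ))⁻¹ • X) ^ 2 * (n * (w ⬝ᵥ (G *ᵥ w))) := by
        gcongr; exact dotProduct_mulVec_le_of_posSemidef_sub hGτ w
    _ = _ := by rw [smul_mulVec, dotProduct_smul, smul_eq_mul]

theorem stmt7_general {n p : ℕ} (hn : 0 < n) (L τ : ℝ) (hL : 0 < L) (hτ : 0 < τ)
    (d : Fin n → ℝ) (hd : ∀ i, 0 ≤ d i ∧ d i ≤ L)
    (X : Matrix (Fin n) (Fin p) ℝ) (G : Matrix (Fin p) (Fin p) ℝ)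
    (hGτ : LoewnerLE (τ • (1 : Matrix (Fin p) (Fin p) ℝ)) G)
    (M : Matrix (Fin p) (Fin p) ℝ)
    (hM : M = (Xᵀ * Matrix.diagonal d * X + (n : ℝ) • G)⁻¹)
    (V : Matrix (Fin n) (Fin n) ℝ)
    (hV : V = Matrix.diagonal d - Matrix.diagonal d * X * M * Xᵀ * Matrix.diagonal d) :
    LoewnerLE ((L * τ⁻¹ * matOpNorm ((Real.sqrt (n : ℝ))⁻¹ • X) ^ 2 + 1)⁻¹ •
        Matrix.diagonal d) V ∧
    LoewnerLE V (Matrix.diagonal d) ∧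
    LoewnerLE (Matrix.diagonal d) (L • (1 : Matrix (Fin n) (Fin n) ℝ)) := by
  have hD : (diagonal d).PosSemidef := posSemidef_diagonal_iff.mpr fun i => (hd i).1
  have hDL : LoewnerLE (diagonal d) (L • 1) := by
    rw [LoewnerLE, smul_one_eq_diagonal, diagonal_sub]
    exact posSemidef_diagonal_iff.mpr fun i => sub_nonneg.mpr (hd i).2
  have hH : ((n : ℝ) • G).PosDef :=
    (posDef_of_posSemidef_sub_smul_one hτ hGτ).smul (by exact_mod_cast hn)
  subst hM hV
  refine ⟨?_, ?_, hDL⟩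
  · exact posSemidef_sub_mul_inv_mul_sub_smul hD hH X (by positivity)
      (dotProduct_mulVec_mulVec_le_of_loewnerLE hn hL.le hτ hDL hGτ X)
  · rw [LoewnerLE, sub_sub_cancel]
    exact PosSemidef.mul_mul_inv_mul_transpose_mul hD.isHermitian
      (hD.transpose_mul_mul_add_posDef hH X).posSemidef X

/-- With `D` diagonal with entries in `[0,L]`, `G ⪰ τ I` symmetric,
`M = (XᵀDX + nG)⁻¹` and `V = D - DXMXᵀD`, one has
`(Lτ⁻¹‖X/√n‖_op² + 1)⁻¹ D ⪯ V ⪯ D ⪯ L Iₙ`. -/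
theorem stmt7 {n p : ℕ} (hn : 0 < n) (L τ : ℝ) (hL : 0 < L) (hτ : 0 < τ)
    (d : Fin n → ℝ) (hd : ∀ i, 0 ≤ d i ∧ d i ≤ L)
    (X : Matrix (Fin n) (Fin p) ℝ) (G : Matrix (Fin p) (Fin p) ℝ)
    (hGsym : G.IsSymm)
    (hGτ : LoewnerLE (τ • (1 : Matrix (Fin p) (Fin p) ℝ)) G)
    (M : Matrix (Fin p) (Fin p) ℝ)
    (hM : M = (Xᵀ * Matrix.diagonal d * X + (n : ℝ) • G)⁻¹)
    (V : Matrix (Fin n) (Fin n) ℝ)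
    (hV : V = Matrix.diagonal d - Matrix.diagonal d * X * M * Xᵀ * Matrix.diagonal d) :
    LoewnerLE ((L * τ⁻¹ * matOpNorm ((Real.sqrt (n : ℝ))⁻¹ • X) ^ 2 + 1)⁻¹ •
        Matrix.diagonal d) V ∧
    LoewnerLE V (Matrix.diagonal d) ∧
    LoewnerLE (Matrix.diagonal d) (L • (1 : Matrix (Fin n) (Fin n) ℝ)) :=
  stmt7_general hn L τ hL hτ d hd X G hGτ M hM V hV
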